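/- arXiv:math/0302076 — 3 statements merged into one kernel-verified Lean document; each statement's English description precedes it below -/
import Mathlib

section
/- Green function conjugation: under the setup of the previous statement with d₀ ≠ 0 (so k < 1), for all 0 < δ ≤ 1 and all z, z' ∈ ℤ^d, G_δ^p(z,z') = φ(z'-z) G_{δk}^s(z,z'), where G_δ^p(z,z') = Σ_{n≥0} δⁿ p_n(z,z') is the Green function with killing rate δ of the walk with transition p, and similarly for G_{δk}^s. -/
/-- The unit steps of ℤ^d, encoded by `Fin d × Bool`: `(i, true) ↔ e_i`,
`(i, false) ↔ -e_i`. -/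
def step (d : ℕ) (u : Fin d × Bool) : Fin d → ℤ :=
  Pi.single u.1 (if u.2 then 1 else -1)

/-- Green function conjugation: if the drift `d₀` of `p` is nonzero (so `k < 1`),
then `G_δ^p(z,z') = φ(z'-z) G_{δk}^s(z,z')` for all `0 < δ ≤ 1`. -/
theorem stmt10 (d : ℕ) (p : Fin d × Bool → ℝ)
    (hp : ∀ u, p u ∈ Set.Ioo (0 : ℝ) 1) (hsum : ∑ u, p u = 1)
    (hd0 : ∃ i : Fin d, p (i, true) ≠ p (i, false))
    (φ : (Fin d → ℤ) → ℝ)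
    (hφ : ∀ z, φ z = ∏ i : Fin d, Real.sqrt (p (i, true) / p (i, false)) ^ (z i))
    (k : ℝ) (hk : k = 2 * ∑ i : Fin d, Real.sqrt (p (i, true) * p (i, false)))
    (s : Fin d × Bool → ℝ)
    (hs : ∀ u, s u = Real.sqrt (p (u.1, true) * p (u.1, false)) / k)
    (δ : ℝ) (hδ0 : 0 < δ) (hδ1 : δ ≤ 1)
    (qp qs : ℕ → (Fin d → ℤ) → (Fin d → ℤ) → ℝ)
    (hqp0 : ∀ z z', qp 0 z z' = if z = z' then 1 else 0)
    (hqps : ∀ n z z', qp (n + 1) z z' = ∑ u, p u * qp n (z + step d u) z')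
    (hqs0 : ∀ z z', qs 0 z z' = if z = z' then 1 else 0)
    (hqss : ∀ n z z', qs (n + 1) z z' = ∑ u, s u * qs n (z + step d u) z')
    (Gp Gs : (Fin d → ℤ) → (Fin d → ℤ) → ℝ)
    (hGp : ∀ z z', Gp z z' = ∑' n : ℕ, δ ^ n * qp n z z')
    (hGs : ∀ z z', Gs z z' = ∑' n : ℕ, (δ * k) ^ n * qs n z z') :
    ∀ z z', Gp z z' = φ (z' - z) * Gs z z' := by
  obtain ⟨i0, _⟩ := hd0
  have hppos : ∀ u, 0 < p u := fun u => (hp u).1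
  have hrpos : ∀ i : Fin d, 0 < Real.sqrt (p (i, true) / p (i, false)) := fun i =>
    Real.sqrt_pos.2 (div_pos (hppos _) (hppos _))
  have hkpos : 0 < k := by
    rw [hk]
    have h1 : ∀ i ∈ Finset.univ, 0 < Real.sqrt (p (i, true) * p (i, false)) := fun i _ =>
      Real.sqrt_pos.2 (mul_pos (hppos _) (hppos _))
    have := Finset.sum_pos h1 ⟨i0, Finset.mem_univ i0⟩
    linarith
  have hφadd : ∀ a b, φ (a + b) = φ a * φ b := by
    intro a b
    simp only [hφ, ← Finset.prod_mul_distrib]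
    exact Finset.prod_congr rfl fun i _ => by
      rw [Pi.add_apply, zpow_add₀ (ne_of_gt (hrpos i))]
  have hφ0 : φ 0 = 1 := by
    simp [hφ]
  have hφstep : ∀ u, φ (step d u) =
      Real.sqrt (p (u.1, true) / p (u.1, false)) ^ (if u.2 then (1:ℤ) else -1) := by
    intro u
    rw [hφ]
    rw [Finset.prod_eq_single u.1]
    · simp [step]
    · intro i _ hi
      simp [step, Pi.single_eq_of_ne hi]
    · intro h; exact absurd (Finset.mem_univ _) h
  have hkey : ∀ u, p u = φ (step d u) * (k * s u) := by
    intro u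
    rw [hφstep, hs]
    rw [mul_comm k, div_mul_cancel₀ _ (ne_of_gt hkpos)]
    obtain ⟨i, b⟩ := u
    have hpt := hppos (i, true)
    have hpf := hppos (i, false)
    cases b
    · simp only [if_neg Bool.false_ne_true, zpow_neg, zpow_one]
      rw [← Real.sqrt_inv, inv_div, ← Real.sqrt_mul (div_nonneg hpf.le hpt.le)]
      rw [show p (i, false) / p (i, true) * (p (i, true) * p (i, false))
          = p (i, false) ^ 2 by field_simp]
      exact (Real.sqrt_sq hpf.le).symm
    · norm_num
      rw [← Real.sqrt_mul (div_nonneg hpt.le hpf.le)]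
      rw [show p (i, true) / p (i, false) * (p (i, true) * p (i, false))
          = p (i, true) ^ 2 by field_simp]
      exact (Real.sqrt_sq hpt.le).symm
  have hmain : ∀ n z z', qp n z z' = φ (z' - z) * (k ^ n * qs n z z') := by
    intro n
    induction n with
    | zero =>
      intro z z'
      rw [hqp0, hqs0]
      by_cases h : z = z'
      · simp [h, hφ0]
      · simp [h]
    | succ n ih =>
      intro z z'
      rw [hqps, hqss, Finset.mul_sum, Finset.mul_sum]
      refine Finset.sum_congr rfl fun u _ => ?_
      rw [ih, hkey u]
      have h1 : φ (z' - z) = φ (step d u) * φ (z' - (z + step d u)) := by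
        rw [← hφadd]
        congr 1
        abel
      rw [h1]
      ring
  intro z z'
  rw [hGp, hGs, ← tsum_mul_left]
  exact tsum_congr fun n => by rw [hmain n z z', mul_pow]; ring
end

section
/- Positivity of the speedup integral: for 0 < a < 1, ∫_{[0,2π]²} (cos u₁ - cos u₂)/((1-cos u₁)+(1-cos u₂)+a(cos u₂ - cos u₁)) du₁ du₂ > 0. -/
open Real MeasureTheory

/-!
Writing `c = cos u₁`, `d = cos u₂`, `A = c - d` and `B = (1 - c) + (1 - d) ≥ |A|`, the integrand
is `A / (B - a A)`. Swapping `u₁ ↔ u₂` preserves the measure and turns it into `-A / (B + a A)`,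
so the integral is half the integral of the sum `2 a A² / (B² - a² A²)`, which is nonnegative and
strictly positive wherever `cos u₁ ≠ cos u₂`.
-/

noncomputable def speedupKernel (a c d : ℝ) : ℝ :=
  (c - d) / ((1 - c) + (1 - d) + a * (d - c))

section Pointwise

variable {a c d : ℝ}

lemma abs_speedupKernel_le (ha : 0 ≤ a) (ha1 : a < 1) (hc : c ≤ 1) (hd : d ≤ 1) :
    |speedupKernel a c d| ≤ 1 / (1 - a) := by
  unfold speedupKernel
  have hA : |c - d| ≤ (1 - c) + (1 - d) := abs_le.mpr ⟨by linarith, by linarith⟩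
  rcases (abs_nonneg (c - d)).eq_or_lt with hcd | hcd
  · rw [abs_div, ← hcd, zero_div]
    exact div_nonneg zero_le_one (by linarith)
  · have hden : (1 - a) * |c - d| ≤ (1 - c) + (1 - d) + a * (d - c) := by
      nlinarith [neg_abs_le (c - d)]
    have hpos : 0 < (1 - c) + (1 - d) + a * (d - c) :=
      lt_of_lt_of_le (mul_pos (by linarith) hcd) hden
    rw [abs_div, abs_of_pos hpos, div_le_div_iff₀ hpos (by linarith)]
    linarith

lemma speedupKernel_add_swap_pos (ha : 0 < a) (ha1 : a < 1) (hc : c ≤ 1) (hd : d ≤ 1)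
    (hcd : c ≠ d) : 0 < speedupKernel a c d + speedupKernel a d c := by
  unfold speedupKernel
  have hA : 0 < |c - d| := abs_pos.mpr (sub_ne_zero.mpr hcd)
  have hB : |c - d| ≤ (1 - c) + (1 - d) := abs_le.mpr ⟨by linarith, by linarith⟩
  have h₁ : 0 < (1 - c) + (1 - d) + a * (d - c) := by nlinarith [neg_abs_le (c - d)]
  have h₂ : 0 < (1 - d) + (1 - c) + a * (c - d) := by nlinarith [le_abs_self (c - d)]
  rw [div_add_div _ _ h₁.ne' h₂.ne']
  have hnum : (c - d) * ((1 - d) + (1 - c) + a * (c - d))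
      + ((1 - c) + (1 - d) + a * (d - c)) * (d - c) = 2 * a * (c - d) ^ 2 := by ring
  rw [hnum]
  exact div_pos (by positivity) (mul_pos h₁ h₂)

lemma speedupKernel_add_swap_nonneg (ha : 0 < a) (ha1 : a < 1) (hc : c ≤ 1) (hd : d ≤ 1) :
    0 ≤ speedupKernel a c d + speedupKernel a d c := by
  rcases eq_or_ne c d with rfl | hcd
  · simp [speedupKernel]
  · exact (speedupKernel_add_swap_pos ha ha1 hc hd hcd).le

end Pointwise

theorem integral_add_swap_eq_two_mul {α : Type*} [MeasurableSpace α] {μ : Measure α}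
    [SFinite μ] {f : α × α → ℝ} (hf : Integrable f (μ.prod μ)) :
    ∫ z, (f z + f z.swap) ∂μ.prod μ = 2 * ∫ z, f z ∂μ.prod μ := by
  refine (integral_add hf hf.swap).trans ?_
  rw [Function.comp_def, integral_prod_swap, two_mul]

lemma integrable_speedupKernel_cos {a : ℝ} {μ : Measure (ℝ × ℝ)} [IsFiniteMeasure μ]
    (ha : 0 ≤ a) (ha1 : a < 1) :
    Integrable (fun z : ℝ × ℝ => speedupKernel a (cos z.1) (cos z.2)) μ := by
  have hmeas : Measurable fun z : ℝ × ℝ => speedupKernel a (cos z.1) (cos z.2) := by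
    unfold speedupKernel
    fun_prop
  refine .of_bound hmeas.aestronglyMeasurable (1 / (1 - a)) (ae_of_all _ fun z => ?_)
  exact abs_speedupKernel_le ha ha1 (cos_le_one _) (cos_le_one _)

lemma volume_restrict_Icc_Ioo_pos {l r x y : ℝ} (hl : l ≤ x) (hxy : x < y) (hr : y ≤ r) :
    0 < volume.restrict (Set.Icc l r) (Set.Ioo x y) := by
  rw [Measure.restrict_apply measurableSet_Ioo,
    Set.inter_eq_left.mpr (Set.Ioo_subset_Icc_self.trans (Set.Icc_subset_Icc hl hr)),
    Real.volume_Ioo]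
  exact ENNReal.ofReal_pos.mpr (sub_pos.mpr hxy)

lemma integral_speedupKernel_add_swap_pos {a : ℝ} (ha : 0 < a) (ha1 : a < 1) :
    0 < ∫ z : ℝ × ℝ, (speedupKernel a (cos z.1) (cos z.2) + speedupKernel a (cos z.2) (cos z.1))
      ∂(volume.restrict (Set.Icc 0 (2 * π))).prod (volume.restrict (Set.Icc 0 (2 * π))) := by
  set μ := volume.restrict (Set.Icc (0 : ℝ) (2 * π))
  have hπ := pi_pos
  have hf := integrable_speedupKernel_cos (μ := μ.prod μ) ha.le ha1
  rw [integral_pos_iff_support_of_nonneg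
    (fun z => speedupKernel_add_swap_nonneg ha ha1 (cos_le_one _) (cos_le_one _))
    (hf.add hf.swap)]
  have hbox : Set.Ioo (π / 2) π ×ˢ Set.Ioo 0 (π / 2) ⊆ Function.support fun z : ℝ × ℝ =>
      speedupKernel a (cos z.1) (cos z.2) + speedupKernel a (cos z.2) (cos z.1) := by
    rintro ⟨u, v⟩ ⟨hu, hv⟩
    have hcu : cos u < 0 := cos_neg_of_pi_div_two_lt_of_lt hu.1 (by linarith [hu.2])
    have hcv : 0 < cos v := cos_pos_of_mem_Ioo ⟨by linarith [hv.1], hv.2⟩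
    exact (speedupKernel_add_swap_pos ha ha1 (cos_le_one _) (cos_le_one _)
      (hcu.trans hcv).ne).ne'
  refine lt_of_lt_of_le ?_ (measure_mono hbox)
  rw [Measure.prod_prod]
  exact ENNReal.mul_pos
    (volume_restrict_Icc_Ioo_pos (by linarith) (by linarith) (by linarith)).ne'
    (volume_restrict_Icc_Ioo_pos le_rfl (by linarith) (by linarith)).ne'

/-- Positivity of the speedup integral: for `0 < a < 1`,
`∫_{[0,2π]²} (cos u₁ - cos u₂)/((1-cos u₁)+(1-cos u₂)+a(cos u₂-cos u₁)) du > 0`. -/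
theorem stmt12 (a : ℝ) (ha : 0 < a) (ha1 : a < 1) :
    0 < ∫ u in Set.Icc (0 : ℝ) (2 * π), ∫ v in Set.Icc (0 : ℝ) (2 * π),
      (Real.cos u - Real.cos v) /
        ((1 - Real.cos u) + (1 - Real.cos v) + a * (Real.cos v - Real.cos u)) := by
  set μ := volume.restrict (Set.Icc (0 : ℝ) (2 * π))
  have hf := integrable_speedupKernel_cos (μ := μ.prod μ) ha.le ha1
  have hsym := integral_add_swap_eq_two_mul hf
  simp only [Prod.fst_swap, Prod.snd_swap] at hsym
  have hpos := integral_speedupKernel_add_swap_pos ha ha1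
  calc 0 < ∫ z : ℝ × ℝ, speedupKernel a (cos z.1) (cos z.2) ∂μ.prod μ := by linarith
    _ = _ := integral_prod _ hf
end

section
/- Off-diagonal ratio bound: for any ω ∈ Ω_{κ₀}, U, δ as above, z ∈ U, y' ∈ U ∪ ∂U with y' ≠ z, and e ∈ 𝒱: |δ G_{U,δ}^ω(z+e,y') - G_{U,δ}^ω(z,y')| ≤ (1/κ₀²) · G_{U,δ}^ω(z,y')/G_{U,δ}^ω(z,z). -/
/-- `∑ w u (B - X u) = B` with nonnegative terms, so `B - X e ≤ B / κ`. -/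
theorem abs_le_div_of_sum_mul_eq_zero {ι : Type*} [Fintype ι] {w X : ι → ℝ} {κ B : ℝ}
    (hκ : 0 < κ) (hw : ∀ u, κ ≤ w u) (hw1 : ∑ u, w u = 1) (hX : ∑ u, w u * X u = 0)
    (hB : ∀ u, X u ≤ B) (e : ι) : |X e| ≤ B / κ := by
  have hw0 : ∀ u, 0 ≤ w u := fun u => hκ.le.trans (hw u)
  have hterm : ∀ u ∈ Finset.univ, 0 ≤ w u * (B - X u) :=
    fun u _ => mul_nonneg (hw0 u) (sub_nonneg.2 (hB u))
  have hsum : ∑ u, w u * (B - X u) = B := by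
    simp only [mul_sub, Finset.sum_sub_distrib, ← Finset.sum_mul, hw1, hX, one_mul, sub_zero]
  have hB0 : 0 ≤ B := hsum ▸ Finset.sum_nonneg hterm
  have hκ1 : κ ≤ 1 :=
    (hw e).trans (hw1 ▸ Finset.single_le_sum (fun u _ => hw0 u) (Finset.mem_univ e))
  have hwe : κ * (B - X e) ≤ B :=
    (mul_le_mul_of_nonneg_right (hw e) (sub_nonneg.2 (hB e))).trans
      ((Finset.single_le_sum hterm (Finset.mem_univ e)).trans hsum.le)
  have hlow : B - X e ≤ B / κ := by rw [le_div_iff₀ hκ]; linarith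
  rw [abs_le]
  constructor
  · linarith [div_nonneg hB0 hκ.le]
  · exact (hB e).trans (le_div_self hB0 hκ hκ1)

namespace KilledWalk

open Finset

variable {V ι : Type*} [AddCommGroup V] [DecidableEq V] [Fintype ι]
  (s : ι → V) (ω : V → ι → ℝ) (U : Set V) [DecidablePred (· ∈ U)]

def prob (x : V) : ℕ → V → ℝ
  | 0 => fun y => if y = x then 1 else 0
  | n + 1 => fun y => ∑ u, if y - s u ∈ U then ω (y - s u) u * prob x n (y - s u) else 0

noncomputable def green (δ : ℝ) (x y : V) : ℝ := ∑' n, δ ^ n * prob s ω U x n y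

variable {s ω U}

theorem prob_zero (x y : V) : prob s ω U x 0 y = if y = x then 1 else 0 := rfl

theorem eq_prob {q : V → ℕ → V → ℝ} (hq0 : ∀ x y, q x 0 y = if y = x then 1 else 0)
    (hqs : ∀ x n y, q x (n + 1) y =
      ∑ u, if y - s u ∈ U then ω (y - s u) u * q x n (y - s u) else 0) :
    q = prob s ω U := by
  funext x n y
  induction n generalizing y with
  | zero => exact hq0 x y
  | succ n ih => simp only [hqs, ih, prob]

theorem prob_nonneg (hω0 : ∀ x u, 0 ≤ ω x u) (x : V) (n : ℕ) (y : V) :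
    0 ≤ prob s ω U x n y := by
  induction n generalizing y with
  | zero => rw [prob_zero]; positivity
  | succ n ih =>
    refine sum_nonneg fun u _ => ?_
    split_ifs
    exacts [mul_nonneg (hω0 _ _) (ih _), le_rfl]

theorem prob_succ' (x : V) (n : ℕ) (y : V) :
    prob s ω U x (n + 1) y = if x ∈ U then ∑ u, ω x u * prob s ω U (x + s u) n y else 0 := by
  induction n generalizing y with
  | zero =>
    simp only [prob, sub_eq_iff_eq_add]
    split_ifs with hx
    · refine sum_congr rfl fun u _ => ?_
      by_cases h : y = x + s u
      · simp [h, hx]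
      · simp [h]
    · refine sum_eq_zero fun u _ => ?_
      by_cases h : y = x + s u
      · simp [h, hx]
      · simp [h]
  | succ n ih =>
    rw [prob]
    simp only [ih, mul_ite, mul_zero]
    split_ifs with hx
    · simp only [mul_sum, prob]
      rw [sum_comm]
      refine sum_congr rfl fun u _ => ?_
      split_ifs
      · exact sum_congr rfl fun v _ => by ring
      · simp
    · simp

theorem prob_le_one (hω0 : ∀ x u, 0 ≤ ω x u) (hω1 : ∀ x, ∑ u, ω x u = 1) (x : V) (n : ℕ)
    (y : V) : prob s ω U x n y ≤ 1 := by
  induction n generalizing x with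
  | zero => rw [prob_zero]; split_ifs <;> norm_num
  | succ n ih =>
    rw [prob_succ']
    split_ifs
    · calc ∑ u, ω x u * prob s ω U (x + s u) n y ≤ ∑ u, ω x u :=
            sum_le_sum fun u _ => mul_le_of_le_one_right (hω0 x u) (ih _)
        _ = 1 := hω1 x
    · exact zero_le_one

theorem sum_range_prob_le_of_superharmonic (hω0 : ∀ x u, 0 ≤ ω x u) {y : V} {Φ : V → ℝ}
    (hΦ0 : ∀ x, 0 ≤ Φ x)
    (hΦ : ∀ x, (if y = x then 1 else 0) + (if x ∈ U then ∑ u, ω x u * Φ (x + s u) else 0) ≤ Φ x)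
    (N : ℕ) (x : V) : ∑ n ∈ range N, prob s ω U x n y ≤ Φ x := by
  induction N generalizing x with
  | zero => simpa using hΦ0 x
  | succ N ih =>
    refine le_trans ?_ (hΦ x)
    rw [sum_range_succ', add_comm, prob_zero]
    simp only [prob_succ']
    gcongr
    split_ifs
    · rw [sum_comm]
      exact sum_le_sum fun u _ => by
        rw [← mul_sum]
        exact mul_le_mul_of_nonneg_left (ih _) (hω0 x u)
    · simp

theorem sum_range_pow_mul_prob_le (hω0 : ∀ x u, 0 ≤ ω x u) {δ : ℝ} (hδ0 : 0 ≤ δ) (hδ1 : δ ≤ 1)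
    (N : ℕ) (x y : V) :
    ∑ n ∈ range N, δ ^ n * prob s ω U x n y ≤ ∑ n ∈ range N, prob s ω U x n y :=
  sum_le_sum fun n _ => mul_le_of_le_one_left (prob_nonneg hω0 x n y) (pow_le_one₀ hδ0 hδ1)

theorem summable_of_lt_one (hω0 : ∀ x u, 0 ≤ ω x u) (hω1 : ∀ x, ∑ u, ω x u = 1) {δ : ℝ}
    (hδ0 : 0 ≤ δ) (hδ1 : δ < 1) (x y : V) : Summable fun n => δ ^ n * prob s ω U x n y :=
  (summable_geometric_of_lt_one hδ0 hδ1).of_nonneg_of_le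
    (fun n => mul_nonneg (pow_nonneg hδ0 n) (prob_nonneg hω0 x n y))
    (fun n => mul_le_of_le_one_right (pow_nonneg hδ0 n) (prob_le_one hω0 hω1 x n y))

/-- `h + 1` bounds the expected number of steps before the walk leaves `U`. -/
theorem summable_of_supersolution (hω0 : ∀ x u, 0 ≤ ω x u) (hω1 : ∀ x, ∑ u, ω x u = 1)
    {δ : ℝ} (hδ0 : 0 ≤ δ) (hδ1 : δ ≤ 1) {h : V → ℝ} (h0 : ∀ w, 0 ≤ h w)
    (hh : ∀ w ∈ U, ∑ u, ω w u * h (w + s u) + 1 ≤ h w) (x y : V) :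
    Summable fun n => δ ^ n * prob s ω U x n y := by
  have hΦ : ∀ w, (if y = w then 1 else 0) +
      (if w ∈ U then ∑ u, ω w u * (h (w + s u) + 1) else 0) ≤ h w + 1 := by
    intro w
    have hy : (if y = w then (1 : ℝ) else 0) ≤ 1 := by split_ifs <;> norm_num
    by_cases hw : w ∈ U
    · rw [if_pos hw]
      simp only [mul_add, mul_one, sum_add_distrib, hω1]
      linarith [hh w hw]
    · rw [if_neg hw]
      linarith [h0 w]
  refine summable_of_sum_range_le (c := h x + 1)
    (fun n => mul_nonneg (pow_nonneg hδ0 n) (prob_nonneg hω0 x n y)) fun N => ?_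
  exact (sum_range_pow_mul_prob_le hω0 hδ0 hδ1 N x y).trans
    (sum_range_prob_le_of_superharmonic (Φ := fun w => h w + 1) hω0
      (fun w => by linarith [h0 w]) hΦ N x)

theorem green_nonneg (hω0 : ∀ x u, 0 ≤ ω x u) {δ : ℝ} (hδ0 : 0 ≤ δ) (x y : V) :
    0 ≤ green s ω U δ x y :=
  tsum_nonneg fun n => mul_nonneg (pow_nonneg hδ0 n) (prob_nonneg hω0 x n y)

/-- A point outside `U` is visited at most once. -/
theorem green_le_one_of_notMem (hω0 : ∀ x u, 0 ≤ ω x u) (hω1 : ∀ x, ∑ u, ω x u = 1) {δ : ℝ}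
    (hδ0 : 0 ≤ δ) (hδ1 : δ ≤ 1) {y : V} (hy : y ∉ U) (x : V) : green s ω U δ x y ≤ 1 := by
  have hΦ : ∀ w, (if y = w then 1 else 0) + (if w ∈ U then ∑ u, ω w u * 1 else 0) ≤ (1 : ℝ) := by
    intro w
    by_cases hw : w ∈ U
    · simp [hw, hω1, show y ≠ w from fun h => hy (h ▸ hw)]
    · simp only [hw, if_false, add_zero]; split_ifs <;> norm_num
  exact Real.tsum_le_of_sum_range_le
    (fun n => mul_nonneg (pow_nonneg hδ0 n) (prob_nonneg hω0 x n y)) fun N =>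
    (sum_range_pow_mul_prob_le hω0 hδ0 hδ1 N x y).trans
      (sum_range_prob_le_of_superharmonic hω0 (fun _ => zero_le_one) hΦ N x)

theorem green_eq_of_mem {δ : ℝ} (hsum : ∀ x y, Summable fun n => δ ^ n * prob s ω U x n y)
    {x : V} (hx : x ∈ U) (y : V) :
    green s ω U δ x y = (if y = x then 1 else 0) + δ * ∑ u, ω x u * green s ω U δ (x + s u) y := by
  have hstep : ∀ n, δ ^ (n + 1) * prob s ω U x (n + 1) y =
      ∑ u, δ * ω x u * (δ ^ n * prob s ω U (x + s u) n y) := fun n => by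
    rw [prob_succ', if_pos hx, mul_sum]
    exact sum_congr rfl fun u _ => by ring
  rw [green, (hsum x y).tsum_eq_zero_add, tsum_congr hstep,
    Summable.tsum_finsetSum fun u _ => (hsum _ _).mul_left _, mul_sum]
  simp only [tsum_mul_left, green, pow_zero, one_mul, prob_zero, mul_assoc]

/-- Decomposition at the first visit to `z`: before it, the walk is the one killed on
leaving `U \ {z}`. -/
theorem prob_eq_prob_sdiff_add (z x : V) (n : ℕ) (y : V) :
    prob s ω U x n y = prob s ω (U \ {z}) x n y +
      ∑ m ∈ range n, prob s ω (U \ {z}) x m z * prob s ω U z (n - m) y := by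
  induction n generalizing x with
  | zero => simp [prob_zero]
  | succ n ih =>
    rw [sum_range_succ']
    simp only [Nat.add_sub_add_right, Nat.sub_zero, prob_zero]
    by_cases hxz : x = z
    · subst hxz
      simp [prob_succ']
    · have hx' : (x ∈ U \ {z}) ↔ x ∈ U := by simp [hxz]
      simp only [prob_succ' (x := x), hx', if_neg (Ne.symm hxz), zero_mul, add_zero]
      split_ifs
      · simp only [ih, mul_add, sum_add_distrib, mul_sum, sum_mul, mul_assoc]
        rw [sum_comm (s := range n)]
      · simp

theorem green_eq_green_sdiff_add {δ : ℝ} {z : V}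
    (hsum : ∀ x y, Summable fun n => δ ^ n * prob s ω U x n y)
    (hsum' : ∀ x y, Summable fun n => δ ^ n * prob s ω (U \ {z}) x n y) (x y : V) :
    green s ω U δ x y = green s ω (U \ {z}) δ x y +
      green s ω (U \ {z}) δ x z * (green s ω U δ z y - if y = z then 1 else 0) := by
  set a : ℕ → ℝ := fun m => δ ^ m * prob s ω (U \ {z}) x m z
  set b : ℕ → ℝ := fun k => δ ^ k * prob s ω U z k y
  have hterm : ∀ n, δ ^ n * prob s ω U x n y = δ ^ n * prob s ω (U \ {z}) x n y +
      (∑ m ∈ range (n + 1), a m * b (n - m) - a n * if y = z then 1 else 0) := by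
    intro n
    have hb0 : b 0 = if y = z then 1 else 0 := by simp [b, prob_zero]
    rw [prob_eq_prob_sdiff_add z, sum_range_succ, Nat.sub_self, hb0, add_sub_cancel_right,
      mul_add, mul_sum]
    congr 1
    refine sum_congr rfl fun m hm => ?_
    rw [← pow_mul_pow_sub δ (mem_range.1 hm).le]
    ring
  have ha : Summable fun n => ‖a n‖ := (hsum' x z).abs
  have hb : Summable fun n => ‖b n‖ := (hsum z y).abs
  have hcauchy := (summable_norm_sum_mul_range_of_summable_norm ha hb).of_norm
  rw [green, tsum_congr hterm, (hsum' x y).tsum_add (hcauchy.sub ((hsum' x z).mul_right _)),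
    hcauchy.tsum_sub ((hsum' x z).mul_right _),
    ← tsum_mul_tsum_eq_tsum_sum_range_of_summable_norm ha hb, tsum_mul_right]
  simp only [green, a, b, mul_sub]

theorem one_le_green_self (hω0 : ∀ x u, 0 ≤ ω x u) {δ : ℝ} (hδ0 : 0 ≤ δ)
    (hsum : ∀ x y, Summable fun n => δ ^ n * prob s ω U x n y) {z : V} (hz : z ∈ U) :
    1 ≤ green s ω U δ z z := by
  rw [green_eq_of_mem hsum hz, if_pos rfl, le_add_iff_nonneg_right]
  exact mul_nonneg hδ0 (sum_nonneg fun u _ => mul_nonneg (hω0 z u) (green_nonneg hω0 hδ0 _ _))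

/-- By the first-visit decomposition, `G(z, y)` and `G(z, z)` satisfy `G = a + ρ G` with the
same return weight `ρ = δ ∑ ω(z, u) G'(z + u, z)`. -/
theorem green_eq_green_self_mul {δ : ℝ} {z : V}
    (hsum : ∀ x y, Summable fun n => δ ^ n * prob s ω U x n y)
    (hsum' : ∀ x y, Summable fun n => δ ^ n * prob s ω (U \ {z}) x n y) (hz : z ∈ U) {y : V}
    (hyz : y ≠ z) :
    green s ω U δ z y =
      green s ω U δ z z * (δ * ∑ u, ω z u * green s ω (U \ {z}) δ (z + s u) y) := by
  set ρ := δ * ∑ u, ω z u * green s ω (U \ {z}) δ (z + s u) z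
  have hdecomp := fun u y => green_eq_green_sdiff_add hsum hsum' (z + s u) y
  have hzy : green s ω U δ z y = δ * ∑ u, ω z u * green s ω (U \ {z}) δ (z + s u) y +
      ρ * green s ω U δ z y := by
    conv_lhs => rw [green_eq_of_mem hsum hz y, if_neg hyz, zero_add]
    simp only [hdecomp, if_neg hyz, sub_zero, mul_add, sum_add_distrib, ρ, sum_mul, mul_assoc]
  have hzz : green s ω U δ z z = 1 + ρ * green s ω U δ z z := by
    conv_lhs => rw [green_eq_of_mem hsum hz z, if_pos rfl]
    simp only [hdecomp, if_true, ρ, sum_mul, mul_assoc, mul_sub, mul_one, add_sub_cancel]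
  linear_combination green s ω U δ z z * hzy - green s ω U δ z y * hzz

theorem mul_green_sub_green_le (hω0 : ∀ x u, 0 ≤ ω x u) (hω1 : ∀ x, ∑ u, ω x u = 1) {δ : ℝ}
    (hδ0 : 0 ≤ δ) (hδ1 : δ ≤ 1) {z : V}
    (hsum : ∀ x y, Summable fun n => δ ^ n * prob s ω U x n y)
    (hsum' : ∀ x y, Summable fun n => δ ^ n * prob s ω (U \ {z}) x n y) (hz : z ∈ U) {y : V}
    (hyz : y ≠ z) {κ₀ : ℝ} (hκ : 0 < κ₀) {e : ι} (hωe : κ₀ ≤ ω z e) :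
    δ * green s ω U δ (z + s e) y - green s ω U δ z y ≤
      1 / κ₀ * (green s ω U δ z y / green s ω U δ z z) := by
  set R := δ * ∑ u, ω z u * green s ω (U \ {z}) δ (z + s u) y
  have hratio : green s ω U δ z y / green s ω U δ z z = R := by
    rw [green_eq_green_self_mul hsum hsum' hz hyz,
      mul_div_cancel_left₀ _ (zero_lt_one.trans_le (one_le_green_self hω0 hδ0 hsum hz)).ne']
  have hret : δ * green s ω (U \ {z}) δ (z + s e) z ≤ 1 :=
    mul_le_one₀ hδ1 (green_nonneg hω0 hδ0 _ _)
      (green_le_one_of_notMem hω0 hω1 hδ0 hδ1 (fun h => h.2 rfl) _)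
  have hesc : κ₀ * (δ * green s ω (U \ {z}) δ (z + s e) y) ≤ R :=
    calc κ₀ * (δ * green s ω (U \ {z}) δ (z + s e) y)
        ≤ δ * (ω z e * green s ω (U \ {z}) δ (z + s e) y) := by
          rw [mul_left_comm]; gcongr; exact green_nonneg hω0 hδ0 _ _
      _ ≤ R := mul_le_mul_of_nonneg_left
          (single_le_sum (f := fun u => ω z u * green s ω (U \ {z}) δ (z + s u) y)
            (fun u _ => mul_nonneg (hω0 z u) (green_nonneg hω0 hδ0 _ _)) (mem_univ e)) hδ0
  have hesc' : δ * green s ω (U \ {z}) δ (z + s e) y ≤ 1 / κ₀ * R := by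
    rw [one_div_mul_eq_div, le_div_iff₀ hκ]; linarith
  have hloss : (δ * green s ω (U \ {z}) δ (z + s e) z - 1) * green s ω U δ z y ≤ 0 :=
    mul_nonpos_of_nonpos_of_nonneg (by linarith) (green_nonneg hω0 hδ0 _ _)
  rw [hratio, green_eq_green_sdiff_add hsum hsum' (z + s e) y, if_neg hyz, sub_zero]
  linarith

theorem abs_mul_green_sub_green_le {κ₀ : ℝ} (hκ : 0 < κ₀) (hω : ∀ x u, κ₀ ≤ ω x u)
    (hω1 : ∀ x, ∑ u, ω x u = 1) {δ : ℝ} (hδ0 : 0 ≤ δ) (hδ1 : δ ≤ 1) {z : V}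
    (hsum : ∀ x y, Summable fun n => δ ^ n * prob s ω U x n y)
    (hsum' : ∀ x y, Summable fun n => δ ^ n * prob s ω (U \ {z}) x n y) (hz : z ∈ U) {y : V}
    (hyz : y ≠ z) (e : ι) :
    |δ * green s ω U δ (z + s e) y - green s ω U δ z y| ≤
      1 / κ₀ ^ 2 * (green s ω U δ z y / green s ω U δ z z) := by
  have hω0 : ∀ x u, 0 ≤ ω x u := fun x u => hκ.le.trans (hω x u)
  have hharm : ∑ u, ω z u * (δ * green s ω U δ (z + s u) y - green s ω U δ z y) = 0 := by
    have hzy := green_eq_of_mem hsum hz y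
    rw [if_neg hyz, zero_add, mul_sum] at hzy
    simp only [mul_sub, sum_sub_distrib, ← sum_mul, hω1, one_mul, mul_left_comm _ δ, ← hzy,
      sub_self]
  refine (abs_le_div_of_sum_mul_eq_zero hκ (hω z) (hω1 z) hharm
    (fun u => mul_green_sub_green_le hω0 hω1 hδ0 hδ1 hsum hsum' hz hyz hκ (hω z u)) e).trans_eq ?_
  ring

/-- With `U` inside the slab `m ≤ w i ≤ M` and `r = 1 + 2 / κ₀`, take
`h w = r ^ (M + 1 - m) - r ^ (min (w i) (M + 1) - m)`: the step `+e_i`, of weight at least `κ₀`,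
multiplies `r ^ (w i - m) ≥ 1` by `r`, so the mean of `h` drops by at least one. -/
theorem exists_supersolution_of_finite {d : ℕ} (hd : 0 < d) {κ₀ : ℝ} (hκ : 0 < κ₀)
    {ω : (Fin d → ℤ) → Fin d × Bool → ℝ} (hω : ∀ x u, κ₀ ≤ ω x u) (hω1 : ∀ x, ∑ u, ω x u = 1)
    {U : Set (Fin d → ℤ)} (hU : U.Finite) :
    ∃ h : (Fin d → ℤ) → ℝ, (∀ w, 0 ≤ h w) ∧ ∀ w ∈ U, ∑ u, ω w u * h (w + step d u) + 1 ≤ h w := by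
  set i : Fin d := ⟨0, hd⟩
  obtain ⟨M, hM⟩ := (hU.image fun w => w i).bddAbove
  obtain ⟨m, hm⟩ := (hU.image fun w => w i).bddBelow
  set r : ℝ := 1 + 2 / κ₀
  have hr1 : 1 ≤ r := le_add_of_nonneg_right (by positivity)
  have hκr : κ₀ * r = κ₀ + 2 := by rw [mul_add, mul_one, mul_div_cancel₀ _ hκ.ne']
  set f : (Fin d → ℤ) → ℝ := fun w => r ^ (min (w i) (M + 1) - m)
  refine ⟨fun w => r ^ (M + 1 - m) - f w,
    fun w => sub_nonneg.2 (zpow_le_zpow_right₀ hr1 (by omega)), fun w hw => ?_⟩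
  have hwM : w i ≤ M := hM ⟨w, hw, rfl⟩
  have hwm : m ≤ w i := hm ⟨w, hw, rfl⟩
  have hf1 : 1 ≤ f w := one_le_zpow₀ hr1 (by omega)
  have hfe : f (w + step d (i, true)) = f w * r := by
    simp only [f, step, Pi.add_apply, Pi.single_eq_same, if_true]
    rw [min_eq_left (by omega), min_eq_left (by omega), show w i + 1 - m = w i - m + 1 by ring,
      zpow_add_one₀ (by positivity)]
  have hf0 : ∀ u, 0 ≤ ω w u * f (w + step d u) :=
    fun u => mul_nonneg (hκ.le.trans (hω w u)) (zpow_nonneg (by positivity) _)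
  have hmean : ∑ u, ω w u * (r ^ (M + 1 - m) - f (w + step d u)) =
      r ^ (M + 1 - m) - ∑ u, ω w u * f (w + step d u) := by
    simp only [mul_sub, sum_sub_distrib, ← sum_mul, hω1, one_mul]
  have hkick : ω w (i, true) * f (w + step d (i, true)) ≤ ∑ u, ω w u * f (w + step d u) :=
    single_le_sum (fun u _ => hf0 u) (mem_univ _)
  have hgrow : 2 * f w ≤ ω w (i, true) * f (w + step d (i, true)) :=
    calc 2 * f w ≤ (κ₀ + 2) * f w := by nlinarith
      _ = κ₀ * (f w * r) := by rw [← hκr]; ring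
      _ ≤ _ := by
        rw [hfe]
        exact mul_le_mul_of_nonneg_right (hω w _)
          (mul_nonneg (zero_le_one.trans hf1) (zero_le_one.trans hr1))
  rw [hmean]
  linarith

theorem summable_of_finite_or_lt_one {d : ℕ} (hd : 0 < d) {κ₀ : ℝ} (hκ : 0 < κ₀)
    {ω : (Fin d → ℤ) → Fin d × Bool → ℝ} (hω : ∀ x u, κ₀ ≤ ω x u) (hω1 : ∀ x, ∑ u, ω x u = 1)
    {U : Set (Fin d → ℤ)} [DecidablePred (· ∈ U)] {δ : ℝ} (hδ0 : 0 ≤ δ) (hδ1 : δ ≤ 1)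
    (hUδ : U.Finite ∨ δ < 1) (x y : Fin d → ℤ) :
    Summable fun n => δ ^ n * prob (step d) ω U x n y := by
  have hω0 : ∀ x u, 0 ≤ ω x u := fun x u => hκ.le.trans (hω x u)
  rcases hUδ with hU | hδ
  · obtain ⟨h, h0, hh⟩ := exists_supersolution_of_finite hd hκ hω hω1 hU
    exact summable_of_supersolution hω0 hω1 hδ0 hδ1 h0 hh x y
  · exact summable_of_lt_one hω0 hω1 hδ0 hδ x y

end KilledWalk

theorem stmt18_general (d : ℕ) (hd : 0 < d) (κ₀ : ℝ) (hκ : 0 < κ₀)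
    (ω : (Fin d → ℤ) → Fin d × Bool → ℝ)
    (hω : ∀ x u, κ₀ ≤ ω x u) (hω1 : ∀ x, ∑ u, ω x u = 1)
    (U : Set (Fin d → ℤ)) [DecidablePred (· ∈ U)]
    (δ : ℝ) (hδ0 : 0 < δ) (hδ1 : δ ≤ 1) (hUδ : U.Finite ∨ δ < 1)
    (q : (Fin d → ℤ) → ℕ → (Fin d → ℤ) → ℝ)
    (hq0 : ∀ x z', q x 0 z' = if z' = x then 1 else 0)
    (hqs : ∀ x n z', q x (n + 1) z' =
      ∑ u, if z' - step d u ∈ U then ω (z' - step d u) u * q x n (z' - step d u) else 0)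
    (G : (Fin d → ℤ) → (Fin d → ℤ) → ℝ)
    (hG : ∀ x z', G x z' = ∑' n : ℕ, δ ^ n * q x n z')
    (z : Fin d → ℤ) (hz : z ∈ U)
    (y' : Fin d → ℤ)
    (hne : y' ≠ z) (e : Fin d × Bool) :
    |δ * G (z + step d e) y' - G z y'| ≤ (1 / κ₀ ^ 2) * (G z y' / G z z) := by
  obtain rfl := KilledWalk.eq_prob hq0 hqs
  obtain rfl : G = KilledWalk.green (step d) ω U δ := funext₂ hG
  exact KilledWalk.abs_mul_green_sub_green_le hκ hω hω1 hδ0.le hδ1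
    (KilledWalk.summable_of_finite_or_lt_one hd hκ hω hω1 hδ0.le hδ1 hUδ)
    (KilledWalk.summable_of_finite_or_lt_one hd hκ hω hω1 hδ0.le hδ1 (hUδ.imp_left (·.sdiff)))
    hz hne e

/-- Off-diagonal ratio bound: for a uniformly elliptic environment `ω ∈ Ω_{κ₀}`,
`z ∈ U`, `y' ∈ U ∪ ∂U` with `y' ≠ z`, and any unit step `e`,
`|δ G_{U,δ}(z+e, y') - G_{U,δ}(z, y')| ≤ (1/κ₀²) G_{U,δ}(z,y') / G_{U,δ}(z,z)`. -/
theorem stmt18 (d : ℕ) (hd : 0 < d) (κ₀ : ℝ) (hκ : 0 < κ₀)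
    (ω : (Fin d → ℤ) → Fin d × Bool → ℝ)
    (hω : ∀ x u, κ₀ ≤ ω x u) (hω1 : ∀ x, ∑ u, ω x u = 1)
    (U : Set (Fin d → ℤ)) [DecidablePred (· ∈ U)]
    (δ : ℝ) (hδ0 : 0 < δ) (hδ1 : δ ≤ 1) (hUδ : U.Finite ∨ δ < 1)
    (q : (Fin d → ℤ) → ℕ → (Fin d → ℤ) → ℝ)
    (hq0 : ∀ x z', q x 0 z' = if z' = x then 1 else 0)
    (hqs : ∀ x n z', q x (n + 1) z' =
      ∑ u, if z' - step d u ∈ U then ω (z' - step d u) u * q x n (z' - step d u) else 0)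
    (G : (Fin d → ℤ) → (Fin d → ℤ) → ℝ)
    (hG : ∀ x z', G x z' = ∑' n : ℕ, δ ^ n * q x n z')
    (z : Fin d → ℤ) (hz : z ∈ U)
    (y' : Fin d → ℤ)
    (hy' : y' ∈ U ∪ {x : Fin d → ℤ | x ∉ U ∧ ∃ u, x + step d u ∈ U})
    (hne : y' ≠ z) (e : Fin d × Bool) :
    |δ * G (z + step d e) y' - G z y'| ≤ (1 / κ₀ ^ 2) * (G z y' / G z z) :=
  stmt18_general d hd κ₀ hκ ω hω hω1 U δ hδ0 hδ1 hUδ q hq0 hqs G hG z hz y' hne e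
end
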